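/- For every n ≥ 1: x and y are point independent in T^point_n, and x and y are not point independent in T'^point_n. -/

import Mathlib

/-- The alphabet `{x, y}`. -/
inductive XY : Type where
  | x : XY
  | y : XY
deriving DecidableEq

/-- The valuation with `x ↦ b₁`, `y ↦ b₂`. -/
def vXY (b₁ b₂ : Bool) : XY → Bool
  | .x => b₁
  | .y => b₂

/-- The trace that carries the valuation `v` on positions `start ≤ i < start + len`
and the all-false valuation `00` elsewhere. -/
def blockTr (v : XY → Bool) (start len : ℕ) : ℕ → XY → Bool :=
  fun i => if start ≤ i ∧ i < start + len then v else fun _ => false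

/-- `E_n = {(11)^{n+2}(00)^ω} ∪ ⋃_{0≤j<n} {(00)^j 10 (00)^ω, (00)^j 01 (00)^ω}`. -/
def En (n : ℕ) : Set (ℕ → XY → Bool) :=
  {τ | τ = blockTr (vXY true true) 0 (n + 2) ∨
       ∃ j, j < n ∧ (τ = blockTr (vXY true false) j 1 ∨ τ = blockTr (vXY false true) j 1)}

/-- `T^point_n = E_n ∪ {(00)^n 10 10 (00)^ω, (00)^n 01 01 (00)^ω}`. -/
def Tpoint (n : ℕ) : Set (ℕ → XY → Bool) :=
  En n ∪ {blockTr (vXY true false) n 2, blockTr (vXY false true) n 2}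

/-- `T'^point_n = E_n ∪ {(00)^n 10 00 (00)^ω, (00)^n 01 00 (00)^ω}`. -/
def Tpoint' (n : ℕ) : Set (ℕ → XY → Bool) :=
  En n ∪ {blockTr (vXY true false) n 1, blockTr (vXY false true) n 1}

/-- `x` and `y` are point independent in `T`. -/
def PointIndep (u w : XY) (T : Set (ℕ → XY → Bool)) : Prop :=
  ∀ i : ℕ, ∀ τ ∈ T, ∀ τ' ∈ T, ∃ τ'' ∈ T, τ'' i u = τ i u ∧ τ'' i w = τ' i w

/-!
Point independence is a condition on each position separately. In `T^point_n` every position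
`i < n + 2` carries all four valuations (for `00` at position `0` one needs `n ≥ 1`, so that
`(00)^n 10 10` starts with `00`), and every later position carries only `00`. In `T'^point_n`,
every trace has equal `x`- and `y`-values at position `n + 1`, while `(11)^{n+2}` has `x = 1`
and `(00)^n 10` has `y = 0` there.
-/

section PointIndep

variable {u w : XY} {T : Set (ℕ → XY → Bool)}

theorem pointIndep_of_realizes_or_const
    (h : ∀ i, (∀ a b, ∃ τ ∈ T, τ i u = a ∧ τ i w = b) ∨ ∀ τ ∈ T, ∀ τ' ∈ T, τ i = τ' i) :
    PointIndep u w T := by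
  intro i τ hτ τ' hτ'
  rcases h i with hall | hconst
  · exact hall (τ i u) (τ' i w)
  · exact ⟨τ, hτ, rfl, by rw [hconst τ hτ τ' hτ']⟩

theorem not_pointIndep_of_apply_eq {i : ℕ} (hdiag : ∀ τ ∈ T, τ i u = τ i w)
    {τ τ' : ℕ → XY → Bool} (hτ : τ ∈ T) (hτ' : τ' ∈ T) (hne : τ i u ≠ τ' i w) :
    ¬ PointIndep u w T := by
  intro hind
  obtain ⟨τ'', hτ'', hu, hw⟩ := hind i τ hτ τ' hτ'
  exact hne (hu ▸ hw ▸ hdiag τ'' hτ'')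

end PointIndep

section blockTr

variable {s l i : ℕ}

theorem blockTr_of_not_mem {v : XY → Bool} (h : ¬ (s ≤ i ∧ i < s + l)) :
    blockTr v s l i = fun _ => false :=
  if_neg h

theorem blockTr_apply_of_not_mem {v : XY → Bool} (h : ¬ (s ≤ i ∧ i < s + l)) (c : XY) :
    blockTr v s l i c = false := by
  rw [blockTr_of_not_mem h]

theorem blockTr_vXY_of_mem {a b : Bool} (h : s ≤ i ∧ i < s + l) :
    blockTr (vXY a b) s l i XY.x = a ∧ blockTr (vXY a b) s l i XY.y = b := by
  rw [blockTr, if_pos h]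
  exact ⟨rfl, rfl⟩

end blockTr

theorem Tpoint_realizes {n i : ℕ} (hn : 1 ≤ n) (hi : i < n + 2) (a b : Bool) :
    ∃ τ ∈ Tpoint n, τ i XY.x = a ∧ τ i XY.y = b := by
  have hA : blockTr (vXY true true) 0 (n + 2) ∈ Tpoint n := Or.inl (Or.inl rfl)
  have hB (j) (hj : j < n) : blockTr (vXY true false) j 1 ∈ Tpoint n :=
    Or.inl (Or.inr ⟨j, hj, Or.inl rfl⟩)
  have hC (j) (hj : j < n) : blockTr (vXY false true) j 1 ∈ Tpoint n :=
    Or.inl (Or.inr ⟨j, hj, Or.inr rfl⟩)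
  have hP : blockTr (vXY true false) n 2 ∈ Tpoint n := Or.inr (Or.inl rfl)
  have hQ : blockTr (vXY false true) n 2 ∈ Tpoint n := Or.inr (Or.inr rfl)
  cases a <;> cases b
  · by_cases hi0 : i = 0
    · exact ⟨_, hP, blockTr_apply_of_not_mem (by omega) _, blockTr_apply_of_not_mem (by omega) _⟩
    · exact ⟨_, hB 0 (by omega), blockTr_apply_of_not_mem (by omega) _,
        blockTr_apply_of_not_mem (by omega) _⟩
  · by_cases hin : i < n
    · exact ⟨_, hC i hin, blockTr_vXY_of_mem (by omega)⟩
    · exact ⟨_, hQ, blockTr_vXY_of_mem (by omega)⟩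
  · by_cases hin : i < n
    · exact ⟨_, hB i hin, blockTr_vXY_of_mem (by omega)⟩
    · exact ⟨_, hP, blockTr_vXY_of_mem (by omega)⟩
  · exact ⟨_, hA, blockTr_vXY_of_mem (by omega)⟩

theorem Tpoint_apply_of_le {n i : ℕ} {τ : ℕ → XY → Bool} (hτ : τ ∈ Tpoint n) (hi : n + 2 ≤ i) :
    τ i = fun _ => false := by
  rcases hτ with (rfl | ⟨j, hj, rfl | rfl⟩) | rfl | rfl <;> exact blockTr_of_not_mem (by omega)

theorem Tpoint'_apply_x_eq_y {n : ℕ} {τ : ℕ → XY → Bool} (hτ : τ ∈ Tpoint' n) :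
    τ (n + 1) XY.x = τ (n + 1) XY.y := by
  rcases hτ with (rfl | ⟨j, hj, rfl | rfl⟩) | rfl | rfl
  · rw [(blockTr_vXY_of_mem (by omega)).1, (blockTr_vXY_of_mem (by omega)).2]
  all_goals rw [blockTr_apply_of_not_mem (by omega), blockTr_apply_of_not_mem (by omega)]

theorem Tpoint_pointIndep {n : ℕ} (hn : 1 ≤ n) : PointIndep XY.x XY.y (Tpoint n) := by
  refine pointIndep_of_realizes_or_const fun i => ?_
  by_cases hi : i < n + 2
  · exact Or.inl (Tpoint_realizes hn hi)
  · refine Or.inr fun τ hτ τ' hτ' => ?_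
    rw [Tpoint_apply_of_le hτ (by omega), Tpoint_apply_of_le hτ' (by omega)]

theorem not_Tpoint'_pointIndep (n : ℕ) : ¬ PointIndep XY.x XY.y (Tpoint' n) := by
  refine not_pointIndep_of_apply_eq (fun τ hτ => Tpoint'_apply_x_eq_y hτ)
    (τ := blockTr (vXY true true) 0 (n + 2)) (Or.inl (Or.inl rfl))
    (τ' := blockTr (vXY true false) n 1) (Or.inr (Or.inl rfl)) ?_
  rw [(blockTr_vXY_of_mem (by omega)).1, blockTr_apply_of_not_mem (by omega)]
  decide

/-- For every `n ≥ 1`: `x` and `y` are point independent in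
`T^point_n`, and not point independent in `T'^point_n`. -/
theorem Tpoint_pointIndep_and_Tpoint'_not (n : ℕ) (hn : 1 ≤ n) :
    PointIndep XY.x XY.y (Tpoint n) ∧ ¬ PointIndep XY.x XY.y (Tpoint' n) :=
  ⟨Tpoint_pointIndep hn, not_Tpoint'_pointIndep n⟩
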